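/- arXiv:2403.15957 — 3 statements merged into one kernel-verified Lean document; each statement's English description precedes it below -/
import Mathlib

section
/- Let H be a finite set with probabilities (p_h)_{h∈H} in [0,1]. For S ⊆ H define the measure μ_S on pairs of subsets (S₁,S₂) of H by the procedure: for h ∈ S toss one coin with probability p_h and include h in both S₁ and S₂ on heads (and in neither on tails); for h ∉ S toss two independent coins to decide membership of h in S₁ and in S₂ separately. For f,g : Finset H → ℝ, define (f ⋆ g)(S) = Σ_{S₁,S₂} f(S₁)g(S₂) μ_S(S₁,S₂). Then if f and g are increasing functions, so is f ⋆ g. -/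
open Finset

noncomputable section

variable {H : Type*}

/-- P(X,Y) = ∏_{h∈X∩Y} p_h · ∏_{h∈X∖Y} (1-p_h) -/
def wtP [DecidableEq H] (p : H → ℝ) (X Y : Finset H) : ℝ :=
  (∏ h ∈ X ∩ Y, p h) * ∏ h ∈ X \ Y, (1 - p h)

/-- Coupled coin-tossing measure μ_S on pairs of subsets of H. -/
def muPair [Fintype H] [DecidableEq H] (p : H → ℝ) (S S₁ S₂ : Finset H) : ℝ :=
  if S ∩ S₁ = S ∩ S₂ then
    wtP p S S₁ * wtP p (univ \ S) S₁ * wtP p (univ \ S) S₂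
  else 0

/-- Convolution (f ⋆ g)(S) = Σ_{S₁,S₂} f(S₁) g(S₂) μ_S(S₁,S₂). -/
def starC [Fintype H] [DecidableEq H] (p : H → ℝ) (f g : Finset H → ℝ) (S : Finset H) : ℝ :=
  ∑ S₁ : Finset H, ∑ S₂ : Finset H, f S₁ * g S₂ * muPair p S S₁ S₂

/-- Product Bernoulli measure μ(S) = ∏_{h∈S} p_h ∏_{h∉S} (1-p_h). -/
def muB [Fintype H] [DecidableEq H] (p : H → ℝ) (S : Finset H) : ℝ :=
  (∏ h ∈ S, p h) * ∏ h ∈ Sᶜ, (1 - p h)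

/-- Expectation with respect to the product Bernoulli measure. -/
def expB [Fintype H] [DecidableEq H] (p : H → ℝ) (f : Finset H → ℝ) : ℝ :=
  ∑ S : Finset H, f S * muB p S

lemma wtP_eq_prod [DecidableEq H] (p : H → ℝ) (X Y : Finset H) :
    wtP p X Y = ∏ h ∈ X, (if h ∈ Y then p h else 1 - p h) := by
  rw [wtP, Finset.prod_ite, Finset.filter_mem_eq_inter, ← Finset.sdiff_eq_filter]

lemma wtP_nonneg [DecidableEq H] (p : H → ℝ) (hp : ∀ h, 0 ≤ p h ∧ p h ≤ 1)
    (X Y : Finset H) : 0 ≤ wtP p X Y := by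
  rw [wtP_eq_prod]
  refine Finset.prod_nonneg fun k _ => ?_
  split
  · exact (hp k).1
  · linarith [(hp k).2]

lemma wtP_insert_right [DecidableEq H] (p : H → ℝ) {h : H} {X : Finset H}
    (hX : h ∉ X) (Y : Finset H) : wtP p X (insert h Y) = wtP p X Y := by
  rw [wtP_eq_prod, wtP_eq_prod]
  refine Finset.prod_congr rfl fun k hk => ?_
  have : k ≠ h := fun e => hX (e ▸ hk)
  simp [Finset.mem_insert, this]

lemma wtP_insert_left [DecidableEq H] (p : H → ℝ) {h : H} {X : Finset H}
    (hX : h ∈ X) (Y : Finset H) :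
    wtP p X Y = (if h ∈ Y then p h else 1 - p h) * wtP p (X.erase h) Y := by
  rw [wtP_eq_prod, wtP_eq_prod, ← Finset.mul_prod_erase X _ hX]

lemma sum_split_elem [Fintype H] [DecidableEq H] (h : H) (F : Finset H → ℝ) :
    ∑ X : Finset H, F X =
      ∑ X ∈ (univ.erase h).powerset, (F X + F (insert h X)) := by
  rw [← Finset.powerset_univ, ← Finset.insert_erase (Finset.mem_univ h),
    Finset.sum_powerset_insert (Finset.notMem_erase h univ), Finset.sum_add_distrib,
    Finset.erase_insert (Finset.notMem_erase h univ)]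

lemma starC_step [Fintype H] [DecidableEq H] (p : H → ℝ)
    (hp : ∀ h, 0 ≤ p h ∧ p h ≤ 1) (f g : Finset H → ℝ)
    (hf : ∀ ⦃S T : Finset H⦄, T ⊆ S → f T ≤ f S)
    (hg : ∀ ⦃S T : Finset H⦄, T ⊆ S → g T ≤ g S)
    (h : H) (S : Finset H) (hhS : h ∉ S) :
    starC p f g S ≤ starC p f g (insert h S) := by
  have expand : ∀ S' : Finset H, starC p f g S' =
      ∑ X ∈ (univ.erase h).powerset, ∑ Y ∈ (univ.erase h).powerset,
        (f X * g Y * muPair p S' X Y + f X * g (insert h Y) * muPair p S' X (insert h Y) +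
         (f (insert h X) * g Y * muPair p S' (insert h X) Y +
          f (insert h X) * g (insert h Y) * muPair p S' (insert h X) (insert h Y))) := by
    intro S'
    rw [starC, sum_split_elem h]
    refine Finset.sum_congr rfl fun X _ => ?_
    rw [sum_split_elem h (fun Y => f X * g Y * muPair p S' X Y),
        sum_split_elem h (fun Y => f (insert h X) * g Y * muPair p S' (insert h X) Y),
        ← Finset.sum_add_distrib]
  rw [expand S, expand (insert h S)]
  refine Finset.sum_le_sum fun X hXm => Finset.sum_le_sum fun Y hYm => ?_
  have hX : h ∉ X := fun hh =>
    Finset.notMem_erase h univ (Finset.mem_powerset.1 hXm hh)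
  have hY : h ∉ Y := fun hh =>
    Finset.notMem_erase h univ (Finset.mem_powerset.1 hYm hh)
  -- intersection facts
  have iX : insert h S ∩ X = S ∩ X := Finset.insert_inter_of_notMem hX
  have iY : insert h S ∩ Y = S ∩ Y := Finset.insert_inter_of_notMem hY
  have iXh : insert h S ∩ insert h X = insert h (S ∩ X) := by
    ext k; by_cases hk : k = h <;> simp [Finset.mem_inter, Finset.mem_insert, hk]
  have iYh : insert h S ∩ insert h Y = insert h (S ∩ Y) := by
    ext k; by_cases hk : k = h <;> simp [Finset.mem_inter, Finset.mem_insert, hk]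
  have sXh : S ∩ insert h X = S ∩ X := by
    ext k; by_cases hk : k = h <;> simp [Finset.mem_inter, Finset.mem_insert, hk, hhS]
  have sYh : S ∩ insert h Y = S ∩ Y := by
    ext k; by_cases hk : k = h <;> simp [Finset.mem_inter, Finset.mem_insert, hk, hhS]
  have hSX : h ∉ S ∩ X := fun hh => hX (Finset.mem_inter.1 hh).2
  have hSY : h ∉ S ∩ Y := fun hh => hY (Finset.mem_inter.1 hh).2
  by_cases hc : S ∩ X = S ∩ Y
  · -- main case
    have hU : h ∈ univ \ S := Finset.mem_sdiff.2 ⟨Finset.mem_univ h, hhS⟩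
    have hUerase : univ \ insert h S = (univ \ S).erase h := by
      ext k; by_cases hk : k = h <;>
        simp [Finset.mem_sdiff, Finset.mem_erase, Finset.mem_insert, hk]
    set q := p h with hq
    set K : Finset H → ℝ := wtP p ((univ \ S).erase h) with hK
    have KiX : K (insert h X) = K X :=
      wtP_insert_right p (Finset.notMem_erase h _) X
    have KiY : K (insert h Y) = K Y :=
      wtP_insert_right p (Finset.notMem_erase h _) Y
    have wU : ∀ A : Finset H, wtP p (univ \ S) A =
        (if h ∈ A then q else 1 - q) * K A := fun A => wtP_insert_left p hU A
    have wS : ∀ A : Finset H, wtP p (insert h S) A =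
        (if h ∈ A then q else 1 - q) * wtP p S A := by
      intro A
      rw [wtP_insert_left p (Finset.mem_insert_self h S) A, Finset.erase_insert hhS]
    have wSiX : wtP p S (insert h X) = wtP p S X := wtP_insert_right p hhS X
    have wSiY : wtP p S (insert h Y) = wtP p S Y := wtP_insert_right p hhS Y
    -- the eight muPair values
    have m1 : muPair p S X Y = wtP p S X * ((1 - q) * K X) * ((1 - q) * K Y) := by
      rw [muPair, if_pos hc, wU, wU, if_neg hX, if_neg hY]
    have m2 : muPair p S X (insert h Y) =
        wtP p S X * ((1 - q) * K X) * (q * K Y) := by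
      rw [muPair, if_pos (by rw [sYh, hc]), wU, wU, if_neg hX,
        if_pos (Finset.mem_insert_self h Y), KiY]
    have m3 : muPair p S (insert h X) Y =
        wtP p S X * (q * K X) * ((1 - q) * K Y) := by
      rw [muPair, if_pos (by rw [sXh, hc]), wU, wU, if_neg hY,
        if_pos (Finset.mem_insert_self h X), KiX, wSiX]
    have m4 : muPair p S (insert h X) (insert h Y) =
        wtP p S X * (q * K X) * (q * K Y) := by
      rw [muPair, if_pos (by rw [sXh, sYh, hc]), wU, wU,
        if_pos (Finset.mem_insert_self h X), if_pos (Finset.mem_insert_self h Y),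
        KiX, KiY, wSiX]
    have n1 : muPair p (insert h S) X Y = ((1 - q) * wtP p S X) * K X * K Y := by
      rw [muPair, if_pos (by rw [iX, iY, hc]), wS, if_neg hX, hUerase]
    have n2 : muPair p (insert h S) X (insert h Y) = 0 := by
      rw [muPair, if_neg]
      rw [iX, iYh]
      intro e
      exact hSX (e ▸ Finset.mem_insert_self h (S ∩ Y))
    have n3 : muPair p (insert h S) (insert h X) Y = 0 := by
      rw [muPair, if_neg]
      rw [iXh, iY]
      intro e
      exact hSY (e.symm ▸ Finset.mem_insert_self h (S ∩ X))
    have n4 : muPair p (insert h S) (insert h X) (insert h Y) =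
        (q * wtP p S X) * K X * K Y := by
      rw [muPair, if_pos (by rw [iXh, iYh, hc]), wS,
        if_pos (Finset.mem_insert_self h X), hUerase, ← hK, KiX, KiY, wSiX]
    rw [m1, m2, m3, m4, n1, n2, n3, n4]
    have hW : 0 ≤ wtP p S X * K X * K Y :=
      mul_nonneg (mul_nonneg (wtP_nonneg p hp _ _) (wtP_nonneg p hp _ _))
        (wtP_nonneg p hp _ _)
    have hq0 : 0 ≤ q := (hp h).1
    have hq1 : q ≤ 1 := (hp h).2
    have ha : f X ≤ f (insert h X) := hf (Finset.subset_insert h X)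
    have hb : g Y ≤ g (insert h Y) := hg (Finset.subset_insert h Y)
    nlinarith [mul_nonneg (mul_nonneg hW (mul_nonneg hq0 (by linarith : (0:ℝ) ≤ 1 - q)))
      (mul_nonneg (sub_nonneg.2 ha) (sub_nonneg.2 hb))]
  · -- degenerate case: everything vanishes
    have z1 : muPair p S X Y = 0 := by rw [muPair, if_neg hc]
    have z2 : muPair p S X (insert h Y) = 0 := by
      rw [muPair, if_neg]; rw [sYh]; exact hc
    have z3 : muPair p S (insert h X) Y = 0 := by
      rw [muPair, if_neg]; rw [sXh]; exact hc
    have z4 : muPair p S (insert h X) (insert h Y) = 0 := by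
      rw [muPair, if_neg]; rw [sXh, sYh]; exact hc
    have z5 : muPair p (insert h S) X Y = 0 := by
      rw [muPair, if_neg]; rw [iX, iY]; exact hc
    have z6 : muPair p (insert h S) X (insert h Y) = 0 := by
      rw [muPair, if_neg]
      rw [iX, iYh]
      intro e
      exact hSX (e ▸ Finset.mem_insert_self h (S ∩ Y))
    have z7 : muPair p (insert h S) (insert h X) Y = 0 := by
      rw [muPair, if_neg]
      rw [iXh, iY]
      intro e
      exact hSY (e.symm ▸ Finset.mem_insert_self h (S ∩ X))
    have z8 : muPair p (insert h S) (insert h X) (insert h Y) = 0 := by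
      rw [muPair, if_neg]
      rw [iXh, iYh]
      intro e
      exact hc (by
        have := congrArg (Finset.erase · h) e
        simpa [Finset.erase_insert hSX, Finset.erase_insert hSY] using this)
    rw [z1, z2, z3, z4, z5, z6, z7, z8]

theorem starC_monotone [Fintype H] [DecidableEq H] (p : H → ℝ)
    (hp : ∀ h, 0 ≤ p h ∧ p h ≤ 1) (f g : Finset H → ℝ)
    (hf : ∀ ⦃S T : Finset H⦄, T ⊆ S → f T ≤ f S)
    (hg : ∀ ⦃S T : Finset H⦄, T ⊆ S → g T ≤ g S) :
    ∀ ⦃S T : Finset H⦄, T ⊆ S → starC p f g T ≤ starC p f g S := by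
  intro S T hTS
  have step : ∀ (a : H) (B : Finset H), starC p f g B ≤ starC p f g (insert a B) := by
    intro a B
    by_cases haB : a ∈ B
    · rw [Finset.insert_eq_self.2 haB]
    · exact starC_step p hp f g hf hg a B haB
  have main : ∀ (D B : Finset H), starC p f g B ≤ starC p f g (B ∪ D) := by
    intro D
    induction D using Finset.induction_on with
    | empty => intro B; simp
    | insert _ _ haD ih =>
        intro B
        rw [Finset.union_insert]
        exact (ih B).trans (step _ _)
  have hmain := main (S \ T) T
  rwa [Finset.union_sdiff_of_subset hTS] at hmain
end
end

section
/- Let H be a finite set with product Bernoulli measure μ determined by probabilities (p_h). Let f₁,…,f_n : Finset H → ℝ be nonnegative increasing functions. If π and π' are partitions of {1,…,n} with π' refining π, then ∏_{B ∈ π'} E_μ[∏_{i∈B} f_i] ≤ ∏_{B ∈ π} E_μ[∏_{i∈B} f_i]. -/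
open Finset

noncomputable section

variable {H : Type*}

section lemmas

variable [Fintype H] [DecidableEq H] {p : H → ℝ}

lemma muB_eq_prod (S : Finset H) :
    muB p S = ∏ h : H, (if h ∈ S then p h else 1 - p h) := by
  rw [muB, ← Finset.prod_mul_prod_compl S]
  congr 1
  · exact Finset.prod_congr rfl fun h hh => by simp [hh]
  · exact Finset.prod_congr rfl fun h hh => by simp [Finset.mem_compl.1 hh]

lemma muB_nonneg (hp : ∀ h, 0 ≤ p h ∧ p h ≤ 1) (S : Finset H) : 0 ≤ muB p S := by
  rw [muB_eq_prod]
  refine Finset.prod_nonneg fun h _ => ?_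
  by_cases hh : h ∈ S <;> simp [hh, (hp h).1, sub_nonneg.2 (hp h).2]

lemma sum_muB : ∑ S : Finset H, muB p S = 1 := by
  have h := Finset.prod_add (p) (fun h => 1 - p h) (univ : Finset H)
  simp only [add_sub_cancel, Finset.prod_const_one] at h
  rw [Finset.powerset_univ] at h
  rw [show (∑ S : Finset H, muB p S)
      = ∑ t : Finset H, (∏ i ∈ t, p i) * ∏ i ∈ univ \ t, (1 - p i) from
    Finset.sum_congr rfl fun S _ => by rw [muB, compl_eq_univ_sdiff]]
  exact h.symm

lemma muB_mul_muB (a b : Finset H) :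
    muB p a * muB p b ≤ muB p (a ⊓ b) * muB p (a ⊔ b) := by
  have : muB p a * muB p b = muB p (a ⊓ b) * muB p (a ⊔ b) := by
    simp only [muB_eq_prod, ← Finset.prod_mul_distrib]
    refine Finset.prod_congr rfl fun h _ => ?_
    by_cases ha : h ∈ a <;> by_cases hb : h ∈ b <;>
      simp [inf_eq_inter, sup_eq_union, ha, hb, mul_comm]
  exact this.le

/-- Harris / FKG inequality for the product Bernoulli measure. -/
lemma harris (hp : ∀ h, 0 ≤ p h ∧ p h ≤ 1) {f g : Finset H → ℝ}
    (hf0 : ∀ S, 0 ≤ f S) (hg0 : ∀ S, 0 ≤ g S)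
    (hf : Monotone f) (hg : Monotone g) :
    expB p f * expB p g ≤ expB p (fun S => f S * g S) := by
  have := fkg f g (muB p) (fun S => muB_nonneg hp S) hf0 hg0 hf hg
    (fun a b => muB_mul_muB a b)
  simp only [sum_muB, one_mul] at this
  simpa only [expB, mul_comm] using this

lemma expB_nonneg (hp : ∀ h, 0 ≤ p h ∧ p h ≤ 1) {f : Finset H → ℝ}
    (hf0 : ∀ S, 0 ≤ f S) : 0 ≤ expB p f :=
  Finset.sum_nonneg fun S _ => mul_nonneg (hf0 S) (muB_nonneg hp S)

end lemmas

lemma prod_mono [Fintype H] [DecidableEq H] {n : ℕ} (f : Fin n → Finset H → ℝ)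
    (hnn : ∀ i S, 0 ≤ f i S)
    (hmono : ∀ i, ∀ ⦃S T : Finset H⦄, T ⊆ S → f i T ≤ f i S) (A : Finset (Fin n)) :
    Monotone (fun S => ∏ i ∈ A, f i S) := fun S T hST =>
  Finset.prod_le_prod (fun i _ => hnn i S) (fun i _ => hmono i hST)

/-- Key induction: product of expectations is at most expectation of product. -/
lemma prod_expB_le [Fintype H] [DecidableEq H] {p : H → ℝ}
    (hp : ∀ h, 0 ≤ p h ∧ p h ≤ 1) {n : ℕ} (f : Fin n → Finset H → ℝ)
    (hnn : ∀ i S, 0 ≤ f i S)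
    (hmono : ∀ i, ∀ ⦃S T : Finset H⦄, T ⊆ S → f i T ≤ f i S)
    (s : Finset (Finset (Fin n))) :
    ∏ B ∈ s, expB p (fun S => ∏ i ∈ B, f i S)
      ≤ expB p (fun S => ∏ B ∈ s, ∏ i ∈ B, f i S) := by
  classical
  induction s using Finset.induction_on with
  | empty =>
      simp [expB, sum_muB]
  | @insert B s hB ih =>
      rw [Finset.prod_insert hB]
      calc expB p (fun S => ∏ i ∈ B, f i S) * ∏ C ∈ s, expB p (fun S => ∏ i ∈ C, f i S)
          ≤ expB p (fun S => ∏ i ∈ B, f i S) * expB p (fun S => ∏ C ∈ s, ∏ i ∈ C, f i S) := by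
            refine mul_le_mul_of_nonneg_left ih ?_
            exact expB_nonneg hp fun S => Finset.prod_nonneg fun i _ => hnn i S
        _ ≤ expB p (fun S => (∏ i ∈ B, f i S) * ∏ C ∈ s, ∏ i ∈ C, f i S) := by
            refine harris hp ?_ ?_ ?_ ?_
            · exact fun S => Finset.prod_nonneg fun i _ => hnn i S
            · exact fun S => Finset.prod_nonneg fun C _ => Finset.prod_nonneg fun i _ => hnn i S
            · exact prod_mono f hnn hmono B
            · intro S T hST
              exact Finset.prod_le_prod
                (fun C _ => Finset.prod_nonneg fun i _ => hnn i S)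
                (fun C _ => prod_mono f hnn hmono C hST)
        _ = expB p (fun S => ∏ C ∈ insert B s, ∏ i ∈ C, f i S) := by
            simp [Finset.prod_insert hB]

theorem partition_refinement_inequality [Fintype H] [DecidableEq H] (p : H → ℝ)
    (hp : ∀ h, 0 ≤ p h ∧ p h ≤ 1) (n : ℕ) (f : Fin n → Finset H → ℝ)
    (hnn : ∀ i S, 0 ≤ f i S)
    (hmono : ∀ i, ∀ ⦃S T : Finset H⦄, T ⊆ S → f i T ≤ f i S)
    (π π' : Finpartition (Finset.univ : Finset (Fin n)))
    (hrefine : ∀ B ∈ π'.parts, ∃ C ∈ π.parts, B ⊆ C) :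
    ∏ B ∈ π'.parts, expB p (fun S => ∏ i ∈ B, f i S)
      ≤ ∏ B ∈ π.parts, expB p (fun S => ∏ i ∈ B, f i S) := by
  classical
  -- decompose π'.parts according to which part of π each part lies in
  have hdecomp : π'.parts = π.parts.biUnion (fun C => π'.parts.filter (· ⊆ C)) := by
    ext B
    simp only [Finset.mem_biUnion, Finset.mem_filter]
    constructor
    · intro hB
      obtain ⟨C, hC, hBC⟩ := hrefine B hB
      exact ⟨C, hC, hB, hBC⟩
    · rintro ⟨C, _, hB, _⟩; exact hB
  have hdisj : ∀ C ∈ π.parts, ∀ C' ∈ π.parts, C ≠ C' →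
      Disjoint (π'.parts.filter (· ⊆ C)) (π'.parts.filter (· ⊆ C')) := by
    intro C hC C' hC' hne
    rw [Finset.disjoint_left]
    intro B hB hB'
    simp only [Finset.mem_filter] at hB hB'
    obtain ⟨x, hx⟩ := π'.nonempty_of_mem_parts hB.1
    have hxd := π.disjoint hC hC' hne
    exact Finset.disjoint_left.1 hxd (hB.2 hx) (hB'.2 hx)
  rw [hdecomp, Finset.prod_biUnion hdisj]
  refine Finset.prod_le_prod (fun C _ => Finset.prod_nonneg fun B _ =>
      expB_nonneg hp fun S => Finset.prod_nonneg fun i _ => hnn i S) ?_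
  intro C hC
  set s := π'.parts.filter (· ⊆ C) with hs
  -- C is the disjoint union of the parts in s
  have hunion : ∀ S : Finset H, ∏ B ∈ s, ∏ i ∈ B, f i S = ∏ i ∈ C, f i S := by
    intro S
    have hsub : s.biUnion id = C := by
      ext i
      simp only [Finset.mem_biUnion, id]
      constructor
      · rintro ⟨B, hB, hiB⟩
        exact (Finset.mem_filter.1 hB).2 hiB
      · intro hiC
        obtain ⟨B, hB, hiB⟩ := π'.exists_mem (Finset.mem_univ i)
        obtain ⟨C', hC', hBC'⟩ := hrefine B hB
        have : C = C' := by
          by_contra hne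
          exact Finset.disjoint_left.1 (π.disjoint hC hC' hne) hiC (hBC' hiB)
        exact ⟨B, Finset.mem_filter.2 ⟨hB, this ▸ hBC'⟩, hiB⟩
    have hd : (s : Set (Finset (Fin n))).PairwiseDisjoint id := fun B hB B' hB' hne =>
      π'.disjoint (Finset.mem_filter.1 hB).1 (Finset.mem_filter.1 hB').1 hne
    rw [← hsub, Finset.prod_biUnion hd]
    rfl
  calc ∏ B ∈ s, expB p (fun S => ∏ i ∈ B, f i S)
      ≤ expB p (fun S => ∏ B ∈ s, ∏ i ∈ B, f i S) := prod_expB_le hp f hnn hmono s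
    _ = expB p (fun S => ∏ i ∈ C, f i S) := by
        refine Finset.sum_congr rfl fun S _ => ?_
        dsimp only
        rw [hunion S]
end
end

section
/- Let H be a finite set with probabilities p_h ∈ [0,1], and let α, β > 0 and nonnegative reals x_h, y_h for h ∈ H. Under the S-strategy (inputs of suppliers in S arrive jointly with probability p_h, inputs of suppliers outside S arrive via two independent shipments each with probability p_h), the expected output Π₁(S) = E[(Σ_{h∈S₁} x_h)^α (Σ_{h∈S₂} y_h)^β], where (S₁,S₂) ~ μ_S, is an increasing function of S. In particular Π₁(H) ≥ Π₁(S) for all S ⊆ H. -/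
open Finset

noncomputable section

variable {H : Type*}

set_option linter.unusedSectionVars false
namespace ProdAux
variable [Fintype H] [DecidableEq H]

def wLoc (p : H → ℝ) (S S₁ S₂ : Finset H) (h : H) : ℝ :=
  if h ∈ S then (if (h ∈ S₁ ↔ h ∈ S₂) then (if h ∈ S₁ then p h else 1 - p h) else 0)
  else (if h ∈ S₁ then p h else 1 - p h) * (if h ∈ S₂ then p h else 1 - p h)

lemma wtP_eq (p : H → ℝ) (X Y : Finset H) :
    wtP p X Y = ∏ h ∈ X, if h ∈ Y then p h else 1 - p h := by
  rw [wtP, Finset.prod_ite, Finset.filter_mem_eq_inter, ← Finset.sdiff_eq_filter]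

lemma muPair_eq (p : H → ℝ) (S S₁ S₂ : Finset H) :
    muPair p S S₁ S₂ = ∏ h : H, wLoc p S S₁ S₂ h := by
  by_cases hc : S ∩ S₁ = S ∩ S₂
  · rw [muPair, if_pos hc, ← Finset.prod_mul_prod_compl S (wLoc p S S₁ S₂)]
    have h1 : ∏ h ∈ S, wLoc p S S₁ S₂ h = wtP p S S₁ := by
      rw [wtP_eq]
      refine Finset.prod_congr rfl fun h hh => ?_
      have hiff : h ∈ S₁ ↔ h ∈ S₂ := by
        constructor <;> intro hm
        · have := hc ▸ (Finset.mem_inter.mpr ⟨hh, hm⟩); exact (Finset.mem_inter.mp this).2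
        · have := hc.symm ▸ (Finset.mem_inter.mpr ⟨hh, hm⟩); exact (Finset.mem_inter.mp this).2
      simp [wLoc, hh, hiff]
    have h2 : ∏ h ∈ Sᶜ, wLoc p S S₁ S₂ h = wtP p (univ \ S) S₁ * wtP p (univ \ S) S₂ := by
      rw [wtP_eq, wtP_eq, ← Finset.prod_mul_distrib, ← Finset.compl_eq_univ_sdiff]
      refine Finset.prod_congr rfl fun h hh => ?_
      have : h ∉ S := Finset.mem_compl.mp hh
      simp [wLoc, this]
    rw [h1, h2]; ring
  · rw [muPair, if_neg hc]
    have : ∃ h ∈ S, ¬(h ∈ S₁ ↔ h ∈ S₂) := by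
      by_contra hall
      push_neg at hall
      exact hc (Finset.ext fun h => by
        simp only [Finset.mem_inter]
        constructor
        · rintro ⟨h1, h2⟩; exact ⟨h1, (hall h h1).mp h2⟩
        · rintro ⟨h1, h2⟩; exact ⟨h1, (hall h h1).mpr h2⟩)
    obtain ⟨h, hh, hne⟩ := this
    exact (Finset.prod_eq_zero (Finset.mem_univ h) (by simp [wLoc, hh, hne])).symm

lemma wLoc_nonneg (p : H → ℝ) (hp : ∀ h, 0 ≤ p h ∧ p h ≤ 1) (S S₁ S₂ : Finset H) (h : H) :
    0 ≤ wLoc p S S₁ S₂ h := by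
  obtain ⟨h0, h1⟩ := hp h
  unfold wLoc
  split_ifs <;> first
    | linarith
    | exact mul_nonneg (by linarith) (by linarith)

lemma sum_split (a : H) (F : Finset H → ℝ) :
    ∑ s : Finset H, F s = ∑ t ∈ (univ.erase a).powerset, (F t + F (insert a t)) := by
  rw [← Finset.powerset_univ]
  conv_lhs => rw [← Finset.insert_erase (Finset.mem_univ a)]
  rw [Finset.sum_powerset_insert (Finset.notMem_erase a univ), Finset.sum_add_distrib]

lemma sum_split2 (a : H) (F : Finset H → Finset H → ℝ) :
    ∑ s₁ : Finset H, ∑ s₂ : Finset H, F s₁ s₂ =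
    ∑ t₁ ∈ (univ.erase a).powerset, ∑ t₂ ∈ (univ.erase a).powerset,
      (F t₁ t₂ + F t₁ (insert a t₂) + F (insert a t₁) t₂ + F (insert a t₁) (insert a t₂)) := by
  rw [sum_split a]
  refine Finset.sum_congr rfl fun t₁ _ => ?_
  rw [sum_split a (F t₁), sum_split a (F (insert a t₁)), ← Finset.sum_add_distrib]
  exact Finset.sum_congr rfl fun t₂ _ => by ring

lemma prod_wLoc_split (p : H → ℝ) (a : H) (S' S S₁ S₂ t₁ t₂ : Finset H)
    (hS' : ∀ h, h ≠ a → (h ∈ S' ↔ h ∈ S))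
    (h1 : ∀ h, h ≠ a → (h ∈ S₁ ↔ h ∈ t₁))
    (h2 : ∀ h, h ≠ a → (h ∈ S₂ ↔ h ∈ t₂)) :
    ∏ h : H, wLoc p S' S₁ S₂ h =
      wLoc p S' S₁ S₂ a * ∏ h ∈ univ.erase a, wLoc p S t₁ t₂ h := by
  rw [← Finset.mul_prod_erase univ _ (Finset.mem_univ a)]
  congr 1
  refine Finset.prod_congr rfl fun h hh => ?_
  have hha : h ≠ a := (Finset.mem_erase.mp hh).1
  simp only [wLoc, hS' h hha, h1 h hha, h2 h hha]

lemma starC_le_insert (p : H → ℝ) (hp : ∀ h, 0 ≤ p h ∧ p h ≤ 1) (f g : Finset H → ℝ)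
    (hf : ∀ ⦃A B : Finset H⦄, A ⊆ B → f A ≤ f B)
    (hg : ∀ ⦃A B : Finset H⦄, A ⊆ B → g A ≤ g B)
    (a : H) (S : Finset H) (ha : a ∉ S) :
    starC p f g S ≤ starC p f g (insert a S) := by
  classical
  set W : Finset H → Finset H → ℝ := fun t₁ t₂ => ∏ h ∈ univ.erase a, wLoc p S t₁ t₂ h with hW
  have hWnn : ∀ t₁ t₂, 0 ≤ W t₁ t₂ := fun t₁ t₂ =>
    Finset.prod_nonneg fun h _ => wLoc_nonneg p hp S t₁ t₂ h
  have triv : ∀ (t : Finset H), ∀ h, h ≠ a → (h ∈ t ↔ h ∈ t) := fun _ _ _ => Iff.rfl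
  have hins : ∀ (t : Finset H), ∀ h, h ≠ a → (h ∈ insert a t ↔ h ∈ t) := fun t h hha => by
    simp [Finset.mem_insert, hha]
  have eq1 : starC p f g S =
      ∑ t₁ ∈ (univ.erase a).powerset, ∑ t₂ ∈ (univ.erase a).powerset,
        ((p a * f (insert a t₁) + (1 - p a) * f t₁) *
          (p a * g (insert a t₂) + (1 - p a) * g t₂)) * W t₁ t₂ := by
    rw [starC]
    simp_rw [muPair_eq]
    rw [sum_split2 a]
    refine Finset.sum_congr rfl fun t₁ ht₁ => Finset.sum_congr rfl fun t₂ ht₂ => ?_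
    have hat₁ : a ∉ t₁ := fun h =>
      (Finset.mem_erase.mp (Finset.mem_powerset.mp ht₁ h)).1 rfl
    have hat₂ : a ∉ t₂ := fun h =>
      (Finset.mem_erase.mp (Finset.mem_powerset.mp ht₂ h)).1 rfl
    rw [prod_wLoc_split p a S S t₁ t₂ t₁ t₂ (triv S) (triv t₁) (triv t₂),
        prod_wLoc_split p a S S t₁ (insert a t₂) t₁ t₂ (triv S) (triv t₁) (hins t₂),
        prod_wLoc_split p a S S (insert a t₁) t₂ t₁ t₂ (triv S) (hins t₁) (triv t₂),
        prod_wLoc_split p a S S (insert a t₁) (insert a t₂) t₁ t₂ (triv S) (hins t₁) (hins t₂)]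
    have e00 : wLoc p S t₁ t₂ a = (1 - p a) * (1 - p a) := by simp [wLoc, ha, hat₁, hat₂]
    have e01 : wLoc p S t₁ (insert a t₂) a = (1 - p a) * p a := by
      simp [wLoc, ha, hat₁, Finset.mem_insert_self]
    have e10 : wLoc p S (insert a t₁) t₂ a = p a * (1 - p a) := by
      simp [wLoc, ha, hat₂, Finset.mem_insert_self]
    have e11 : wLoc p S (insert a t₁) (insert a t₂) a = p a * p a := by
      simp [wLoc, ha, Finset.mem_insert_self]
    rw [e00, e01, e10, e11]
    ring
  have eq2 : starC p f g (insert a S) =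
      ∑ t₁ ∈ (univ.erase a).powerset, ∑ t₂ ∈ (univ.erase a).powerset,
        (p a * (f (insert a t₁) * g (insert a t₂)) + (1 - p a) * (f t₁ * g t₂)) * W t₁ t₂ := by
    rw [starC]
    simp_rw [muPair_eq]
    rw [sum_split2 a]
    refine Finset.sum_congr rfl fun t₁ ht₁ => Finset.sum_congr rfl fun t₂ ht₂ => ?_
    have hat₁ : a ∉ t₁ := fun h =>
      (Finset.mem_erase.mp (Finset.mem_powerset.mp ht₁ h)).1 rfl
    have hat₂ : a ∉ t₂ := fun h =>
      (Finset.mem_erase.mp (Finset.mem_powerset.mp ht₂ h)).1 rfl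
    have hSins : ∀ h, h ≠ a → (h ∈ insert a S ↔ h ∈ S) := hins S
    rw [prod_wLoc_split p a (insert a S) S t₁ t₂ t₁ t₂ hSins (triv t₁) (triv t₂),
        prod_wLoc_split p a (insert a S) S t₁ (insert a t₂) t₁ t₂ hSins (triv t₁) (hins t₂),
        prod_wLoc_split p a (insert a S) S (insert a t₁) t₂ t₁ t₂ hSins (hins t₁) (triv t₂),
        prod_wLoc_split p a (insert a S) S (insert a t₁) (insert a t₂) t₁ t₂ hSins (hins t₁) (hins t₂)]
    have c00 : wLoc p (insert a S) t₁ t₂ a = 1 - p a := by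
      simp [wLoc, hat₁, hat₂, Finset.mem_insert_self]
    have c01 : wLoc p (insert a S) t₁ (insert a t₂) a = 0 := by
      simp [wLoc, hat₁, Finset.mem_insert_self]
    have c10 : wLoc p (insert a S) (insert a t₁) t₂ a = 0 := by
      simp [wLoc, hat₂, Finset.mem_insert_self]
    have c11 : wLoc p (insert a S) (insert a t₁) (insert a t₂) a = p a := by
      simp [wLoc, Finset.mem_insert_self]
    rw [c00, c01, c10, c11]
    ring
  rw [eq1, eq2]
  refine Finset.sum_le_sum fun t₁ _ => Finset.sum_le_sum fun t₂ _ => ?_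
  refine mul_le_mul_of_nonneg_right ?_ (hWnn t₁ t₂)
  obtain ⟨hq0, hq1⟩ := hp a
  have hf' : f t₁ ≤ f (insert a t₁) := hf (Finset.subset_insert a t₁)
  have hg' : g t₂ ≤ g (insert a t₂) := hg (Finset.subset_insert a t₂)
  nlinarith [mul_nonneg (mul_nonneg hq0 (by linarith : (0:ℝ) ≤ 1 - p a))
    (mul_nonneg (sub_nonneg.mpr hf') (sub_nonneg.mpr hg'))]

lemma starC_mono (p : H → ℝ) (hp : ∀ h, 0 ≤ p h ∧ p h ≤ 1) (f g : Finset H → ℝ)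
    (hf : ∀ ⦃A B : Finset H⦄, A ⊆ B → f A ≤ f B)
    (hg : ∀ ⦃A B : Finset H⦄, A ⊆ B → g A ≤ g B)
    {T S : Finset H} (hTS : T ⊆ S) : starC p f g T ≤ starC p f g S := by
  have key : ∀ U T : Finset H, starC p f g T ≤ starC p f g (T ∪ U) := by
    intro U
    induction U using Finset.induction_on with
    | empty => intro T; simp
    | @insert a U haU ih =>
      intro T
      by_cases haTU : a ∈ T ∪ U
      · have h' : T ∪ insert a U = T ∪ U := by
          rw [Finset.union_insert, Finset.insert_eq_self.mpr haTU]
        rw [h']; exact ih T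
      · calc starC p f g T ≤ starC p f g (T ∪ U) := ih T
          _ ≤ starC p f g (insert a (T ∪ U)) :=
            starC_le_insert p hp f g hf hg a (T ∪ U) haTU
          _ = starC p f g (T ∪ insert a U) := by rw [Finset.union_insert]
  have h := key (S \ T) T
  rwa [Finset.union_sdiff_of_subset hTS] at h

end ProdAux

theorem production_two_inputs [Fintype H] [DecidableEq H] (p : H → ℝ)
    (hp : ∀ h, 0 ≤ p h ∧ p h ≤ 1) (α β : ℝ) (hα : 0 < α) (hβ : 0 < β)
    (x y : H → ℝ) (hx : ∀ h, 0 ≤ x h) (hy : ∀ h, 0 ≤ y h) :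
    (∀ ⦃S T : Finset H⦄, T ⊆ S →
      starC p (fun S₁ => (∑ h ∈ S₁, x h) ^ α) (fun S₂ => (∑ h ∈ S₂, y h) ^ β) T
        ≤ starC p (fun S₁ => (∑ h ∈ S₁, x h) ^ α) (fun S₂ => (∑ h ∈ S₂, y h) ^ β) S) ∧
    (∀ S : Finset H,
      starC p (fun S₁ => (∑ h ∈ S₁, x h) ^ α) (fun S₂ => (∑ h ∈ S₂, y h) ^ β) S
        ≤ starC p (fun S₁ => (∑ h ∈ S₁, x h) ^ α) (fun S₂ => (∑ h ∈ S₂, y h) ^ β)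
            Finset.univ) := by
  have hf : ∀ ⦃A B : Finset H⦄, A ⊆ B → (∑ h ∈ A, x h) ^ α ≤ (∑ h ∈ B, x h) ^ α :=
    fun A B hAB => Real.rpow_le_rpow (Finset.sum_nonneg fun h _ => hx h)
      (Finset.sum_le_sum_of_subset_of_nonneg hAB fun h _ _ => hx h) hα.le
  have hg : ∀ ⦃A B : Finset H⦄, A ⊆ B → (∑ h ∈ A, y h) ^ β ≤ (∑ h ∈ B, y h) ^ β :=
    fun A B hAB => Real.rpow_le_rpow (Finset.sum_nonneg fun h _ => hy h)
      (Finset.sum_le_sum_of_subset_of_nonneg hAB fun h _ _ => hy h) hβ.le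
  exact ⟨fun S T hTS => ProdAux.starC_mono p hp _ _ hf hg hTS,
    fun S => ProdAux.starC_mono p hp _ _ hf hg (Finset.subset_univ S)⟩
end
end
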